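/- arXiv:math/0505287 — 9 statements merged into one kernel-verified Lean document; each statement's English description precedes it below -/
import Mathlib

section
/- Let γ : ℝ → ℝ² be a C¹ curve parameterized by arc length (|γ'(s)| = 1 for all s). Fix ε > 0 and s₀ ∈ ℝ. Suppose that for all s₁ ≠ s₂ near s₀, the lines L_{s_i}(r) = γ(s_i) + r·(γ₂'(s_i), -γ₁'(s_i)) do not intersect for |r| < ε (for distinct parameters s₁, s₂). Then γ' is Lipschitz at s₀: there exists a constant L such that |γ'(s₀+h) - γ'(s₀)| ≤ L|h| for all sufficiently small h. -/
open Set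

/-- perpendicular of a planar vector: (a,b)^⊥ = (b,-a) -/
def perp (v : ℝ × ℝ) : ℝ × ℝ := (v.2, -v.1)

/-- Euclidean dot product on ℝ² -/
def dot2 (v w : ℝ × ℝ) : ℝ := v.1 * w.1 + v.2 * w.2

/-- Euclidean norm on ℝ² -/
noncomputable def enorm2 (v : ℝ × ℝ) : ℝ := Real.sqrt (dot2 v v)

lemma dot2_self_one {v : ℝ × ℝ} (h : enorm2 v = 1) : v.1 ^ 2 + v.2 ^ 2 = 1 := by
  have := (Real.sqrt_eq_one).1 h
  unfold dot2 at this
  nlinarith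

lemma comp_lip (γ : ℝ → ℝ × ℝ) (hγ : ContDiff ℝ 1 γ)
    (harc : ∀ s, enorm2 (deriv γ s) = 1) (a b : ℝ) :
    |(γ b).1 - (γ a).1| ≤ |b - a| ∧ |(γ b).2 - (γ a).2| ≤ |b - a| := by
  have hdiff : Differentiable ℝ γ := hγ.differentiable one_ne_zero
  have h1 : ∀ s, HasDerivAt (fun t => (γ t).1) (deriv γ s).1 s := by
    intro s
    simpa using ((hdiff s).hasDerivAt.hasFDerivAt.fst).hasDerivAt
  have h2 : ∀ s, HasDerivAt (fun t => (γ t).2) (deriv γ s).2 s := by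
    intro s
    simpa using ((hdiff s).hasDerivAt.hasFDerivAt.snd).hasDerivAt
  have hb : ∀ s, |(deriv γ s).1| ≤ 1 ∧ |(deriv γ s).2| ≤ 1 := by
    intro s
    have := dot2_self_one (harc s)
    constructor <;> [skip; skip] <;>
      · rw [abs_le]; constructor <;> nlinarith
  constructor
  · have := Convex.norm_image_sub_le_of_norm_deriv_le (f := fun t => (γ t).1)
      (s := Set.univ) (C := 1)
      (fun x _ => (h1 x).differentiableAt)
      (fun x _ => by
        rw [(h1 x).deriv]; simpa using (hb x).1)
      convex_univ (mem_univ a) (mem_univ b)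
    simpa using this
  · have := Convex.norm_image_sub_le_of_norm_deriv_le (f := fun t => (γ t).2)
      (s := Set.univ) (C := 1)
      (fun x _ => (h2 x).differentiableAt)
      (fun x _ => by
        rw [(h2 x).deriv]; simpa using (hb x).2)
      convex_univ (mem_univ a) (mem_univ b)
    simpa using this

lemma cross_sq (x y w1 w2 h : ℝ) (hx : x ^ 2 ≤ h ^ 2) (hy : y ^ 2 ≤ h ^ 2)
    (hw : w1 ^ 2 + w2 ^ 2 = 1) :
    (x * (-w1) - y * w2) ^ 2 ≤ 2 * h ^ 2 := by
  nlinarith [sq_nonneg (x * w2 - y * w1)]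

set_option maxHeartbeats 1000000 in
/-- non-crossing of rules in an ε-strip forces γ' to be
Lipschitz at s₀. -/
theorem stmt0 (γ : ℝ → ℝ × ℝ) (hγ : ContDiff ℝ 1 γ)
    (harc : ∀ s, enorm2 (deriv γ s) = 1)
    (ε : ℝ) (hε : 0 < ε) (s₀ : ℝ)
    (hnocross : ∃ δ > 0, ∀ s₁ s₂, |s₁ - s₀| < δ → |s₂ - s₀| < δ → s₁ ≠ s₂ →
      ∀ r₁ r₂, |r₁| < ε → |r₂| < ε →
        γ s₁ + r₁ • perp (deriv γ s₁) ≠ γ s₂ + r₂ • perp (deriv γ s₂)) :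
    ∃ L : ℝ, ∃ δ' > 0, ∀ h : ℝ, |h| < δ' →
      enorm2 (deriv γ (s₀ + h) - deriv γ s₀) ≤ L * |h| := by
  obtain ⟨δ, hδ, hnc⟩ := hnocross
  have hcont : Continuous (deriv γ) := hγ.continuous_deriv le_rfl
  -- choose δ₂ so that the derivatives stay close (in sup norm) to deriv γ s₀
  have hc0 : ContinuousAt (deriv γ) s₀ := hcont.continuousAt
  obtain ⟨δ₂, hδ₂, hcl⟩ := Metric.continuousAt_iff.1 hc0 (1/2) (by norm_num)
  refine ⟨2 / ε, min δ δ₂, lt_min hδ hδ₂, ?_⟩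
  intro h hh
  by_cases h0 : h = 0
  · subst h0
    simp [enorm2, dot2]
  set u := deriv γ (s₀ + h) with hu_def
  set v := deriv γ s₀ with hv_def
  have hu : u.1 ^ 2 + u.2 ^ 2 = 1 := dot2_self_one (harc _)
  have hv : v.1 ^ 2 + v.2 ^ 2 = 1 := dot2_self_one (harc _)
  -- closeness of derivatives
  have hclose : dist u v < 1/2 := by
    apply hcl
    have : |s₀ + h - s₀| < δ₂ := by
      simpa using lt_of_lt_of_le hh (min_le_right _ _)
    simpa [Real.dist_eq] using this
  have hc1 : |u.1 - v.1| < 1/2 := by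
    have := le_trans (le_max_left _ _) (le_of_eq (rfl : max |u.1 - v.1| |u.2 - v.2| = _))
    calc |u.1 - v.1| ≤ dist u v := by
          rw [Prod.dist_eq]
          exact le_trans (le_of_eq (Real.dist_eq _ _).symm) (le_max_left _ _)
      _ < 1/2 := hclose
  have hc2 : |u.2 - v.2| < 1/2 := by
    calc |u.2 - v.2| ≤ dist u v := by
          rw [Prod.dist_eq]
          exact le_trans (le_of_eq (Real.dist_eq _ _).symm) (le_max_right _ _)
      _ < 1/2 := hclose
  -- nonnegativity of the inner product
  have ht0 : 0 ≤ u.1 * v.1 + u.2 * v.2 := by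
    have a1 : |v.1| ≤ 1 := by rw [abs_le]; constructor <;> nlinarith
    have a2 : |v.2| ≤ 1 := by rw [abs_le]; constructor <;> nlinarith
    have b1 := abs_lt.1 hc1
    have b2 := abs_lt.1 hc2
    have c1 := abs_le.1 a1
    have c2 := abs_le.1 a2
    nlinarith [sq_nonneg (u.1 - v.1), sq_nonneg (u.2 - v.2)]
  set d := u.1 * v.2 - u.2 * v.1 with hd_def
  -- the cross product of the two tangents is controlled by |h|
  have hq := comp_lip γ hγ harc (s₀ + h) s₀
  have hq1 : |(γ s₀).1 - (γ (s₀ + h)).1| ≤ |h| := by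
    simpa using hq.1
  have hq2 : |(γ s₀).2 - (γ (s₀ + h)).2| ≤ |h| := by
    simpa using hq.2
  have hd : |d| ≤ Real.sqrt 2 * |h| / ε := by
    by_contra hlt
    push_neg at hlt
    have hhpos : 0 < |h| := abs_pos.2 h0
    have hsq2 : (0:ℝ) < Real.sqrt 2 := Real.sqrt_pos.2 (by norm_num)
    have hdpos : 0 < |d| := lt_trans (by positivity) hlt
    have hdne : d ≠ 0 := fun hz => by simp [hz] at hdpos
    set q : ℝ × ℝ := γ s₀ - γ (s₀ + h) with hq_def
    have hq1' : |q.1| ≤ |h| := hq1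
    have hq2' : |q.2| ≤ |h| := hq2
    set r₁ := (q.1 * (-v.1) - q.2 * v.2) / d with hr1_def
    set r₂ := (q.1 * (-u.1) - q.2 * u.2) / d with hr2_def
    -- cross-product bounds
    have hx2 : q.1 ^ 2 ≤ h ^ 2 := by
      have := pow_le_pow_left₀ (abs_nonneg q.1) hq1' 2
      rwa [sq_abs, sq_abs] at this
    have hy2 : q.2 ^ 2 ≤ h ^ 2 := by
      have := pow_le_pow_left₀ (abs_nonneg q.2) hq2' 2
      rwa [sq_abs, sq_abs] at this
    have key : ∀ w : ℝ × ℝ, w.1 ^ 2 + w.2 ^ 2 = 1 →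
        |q.1 * (-w.1) - q.2 * w.2| ≤ Real.sqrt 2 * |h| := by
      intro w hw
      have h2 : (q.1 * (-w.1) - q.2 * w.2) ^ 2 ≤ 2 * h ^ 2 :=
        cross_sq q.1 q.2 w.1 w.2 h hx2 hy2 hw
      calc |q.1 * (-w.1) - q.2 * w.2| = Real.sqrt ((q.1 * (-w.1) - q.2 * w.2) ^ 2) :=
            (Real.sqrt_sq_eq_abs _).symm
        _ ≤ Real.sqrt (2 * h ^ 2) := Real.sqrt_le_sqrt h2
        _ = Real.sqrt 2 * |h| := by
            rw [Real.sqrt_mul (by norm_num), ← sq_abs, Real.sqrt_sq (abs_nonneg _)]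
    have hεd : Real.sqrt 2 * |h| < ε * |d| := by
      have := (div_lt_iff₀ hε).1 hlt
      linarith
    have hr1 : |r₁| < ε := by
      rw [hr1_def, abs_div]
      rw [div_lt_iff₀ hdpos]
      calc |q.1 * (-v.1) - q.2 * v.2| ≤ Real.sqrt 2 * |h| := key v hv
        _ < ε * |d| := hεd
    have hr2 : |r₂| < ε := by
      rw [hr2_def, abs_div]
      rw [div_lt_iff₀ hdpos]
      calc |q.1 * (-u.1) - q.2 * u.2| ≤ Real.sqrt 2 * |h| := key u hu
        _ < ε * |d| := hεd
    have hs1 : |s₀ + h - s₀| < δ := by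
      simpa using lt_of_lt_of_le hh (min_le_left _ _)
    have hs2 : |s₀ - s₀| < δ := by simpa using hδ
    have hne : s₀ + h ≠ s₀ := by
      intro hcon; apply h0; linarith
    apply hnc (s₀ + h) s₀ hs1 hs2 hne r₁ r₂ hr1 hr2
    have e1 : (γ s₀).1 - (γ (s₀ + h)).1 = q.1 := rfl
    have e2 : (γ s₀).2 - (γ (s₀ + h)).2 = q.2 := rfl
    have hA : r₁ * u.2 - r₂ * v.2 = q.1 := by
      rw [hr1_def, hr2_def]
      field_simp
      rw [hd_def]; ring
    have hB : r₁ * (-u.1) - r₂ * (-v.1) = q.2 := by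
      rw [hr1_def, hr2_def]
      field_simp
      rw [hd_def]; ring
    apply Prod.ext
    · show (γ (s₀ + h)).1 + r₁ * u.2 = (γ s₀).1 + r₂ * v.2
      have := e1 ▸ hA
      linarith
    · show (γ (s₀ + h)).2 + r₁ * (-u.1) = (γ s₀).2 + r₂ * (-v.1)
      have := e2 ▸ hB
      linarith
  -- conclude
  have hd2 : d ^ 2 ≤ 2 * h ^ 2 / ε ^ 2 := by
    have h1 : |d| ^ 2 ≤ (Real.sqrt 2 * |h| / ε) ^ 2 := by
      apply pow_le_pow_left₀ (abs_nonneg _) hd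
    rw [sq_abs] at h1
    have h2 : (Real.sqrt 2 * |h| / ε) ^ 2 = 2 * h ^ 2 / ε ^ 2 := by
      rw [div_pow, mul_pow, Real.sq_sqrt (by norm_num : (0:ℝ) ≤ 2), sq_abs]
    linarith [h2 ▸ h1]
  have hsum : dot2 (u - v) (u - v) ≤ (2 / ε * |h|) ^ 2 := by
    have hε2 : (0:ℝ) < ε ^ 2 := by positivity
    have expand : (2 / ε * |h|) ^ 2 = 4 * h ^ 2 / ε ^ 2 := by
      rw [mul_pow, div_pow, sq_abs]; ring
    rw [expand]
    show (u - v).1 * (u - v).1 + (u - v).2 * (u - v).2 ≤ 4 * h ^ 2 / ε ^ 2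
    have hsub1 : (u - v).1 = u.1 - v.1 := rfl
    have hsub2 : (u - v).2 = u.2 - v.2 := rfl
    rw [hsub1, hsub2]
    -- (u-v)·(u-v) = 2 - 2t ≤ 2 - 2t² = 2d² since 0 ≤ t ≤ 1
    have hident : (u.1 * v.1 + u.2 * v.2) ^ 2 + d ^ 2 = 1 := by
      rw [hd_def]; nlinarith
    have ht1 : u.1 * v.1 + u.2 * v.2 ≤ 1 := by
      nlinarith [hident, sq_nonneg (u.1 * v.1 + u.2 * v.2 - 1), sq_nonneg d]
    have hprod' : 0 ≤ (u.1 * v.1 + u.2 * v.2) - (u.1 * v.1 + u.2 * v.2) ^ 2 := by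
      nlinarith [mul_nonneg ht0 (by linarith : (0:ℝ) ≤ 1 - (u.1 * v.1 + u.2 * v.2))]
    have e : (u.1 - v.1) * (u.1 - v.1) + (u.2 - v.2) * (u.2 - v.2)
        = 2 - 2 * (u.1 * v.1 + u.2 * v.2) := by
      linear_combination hu + hv
    have e2 : 2 - 2 * (u.1 * v.1 + u.2 * v.2) ≤ 2 * d ^ 2 := by
      linarith [hprod', hident]
    have e3 : 2 * d ^ 2 ≤ 4 * h ^ 2 / ε ^ 2 := by
      have h4 := mul_le_mul_of_nonneg_left hd2 (by norm_num : (0:ℝ) ≤ 2)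
      calc 2 * d ^ 2 ≤ 2 * (2 * h ^ 2 / ε ^ 2) := h4
        _ = 4 * h ^ 2 / ε ^ 2 := by ring
    calc (u.1 - v.1) * (u.1 - v.1) + (u.2 - v.2) * (u.2 - v.2)
        = 2 - 2 * (u.1 * v.1 + u.2 * v.2) := e
      _ ≤ 2 * d ^ 2 := e2
      _ ≤ 4 * h ^ 2 / ε ^ 2 := e3
  calc enorm2 (u - v) = Real.sqrt (dot2 (u - v) (u - v)) := rfl
    _ ≤ Real.sqrt ((2 / ε * |h|) ^ 2) := Real.sqrt_le_sqrt hsum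
    _ = 2 / ε * |h| := Real.sqrt_sq (by positivity)
end

section
/- Let Ω ⊂ ℝ² be open and let p̄, q̄ : Ω → ℝ be C¹ functions with p̄² + q̄² = 1 on Ω and p̄_x + q̄_y = 0 on Ω (the H-minimal surface equation). Then along any integral curve c of the vector field (q̄, -p̄), the vector field (q̄, -p̄) is constant; consequently each integral curve of (q̄, -p̄) is a straight line segment. -/
open Set

lemma const_of_hasDerivAt_zero (I : Set ℝ) (hI : Convex ℝ I) (f : ℝ → ℝ × ℝ)
    (hf : ∀ t ∈ I, HasDerivAt f 0 t) :
    ∀ t₁ ∈ I, ∀ t₂ ∈ I, f t₁ = f t₂ := by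
  intro t₁ h₁ t₂ h₂
  have key : ‖f t₂ - f t₁‖ ≤ 0 * ‖t₂ - t₁‖ := by
    refine hI.norm_image_sub_le_of_norm_hasFDerivWithin_le
      (f' := fun _ => (0 : ℝ →L[ℝ] ℝ × ℝ)) (fun x hx => ?_) (fun x hx => norm_zero.le) h₁ h₂
    have := (hf x hx).hasFDerivAt.hasFDerivWithinAt (s := I)
    have h0 : ContinuousLinearMap.toSpanSingleton ℝ (0 : ℝ × ℝ) = 0 := by
      ext <;> simp
    rw [h0] at this
    exact this
  have h0 : f t₂ - f t₁ = 0 := by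
    have : ‖f t₂ - f t₁‖ ≤ 0 := by simpa using key
    simpa [norm_eq_zero] using le_antisymm this (norm_nonneg _)
  exact (sub_eq_zero.mp h0).symm


/-- along integral curves of (q̄,-p̄), where (p̄,q̄) is a C¹ unit
divergence-free field on an open Ω ⊂ ℝ², the field (q̄,-p̄) is constant, so
each integral curve is a straight line segment. -/

theorem stmt2 (Ω : Set (ℝ × ℝ)) (hΩ : IsOpen Ω)
    (p q : ℝ × ℝ → ℝ)
    (hp : ContDiffOn ℝ 1 p Ω) (hq : ContDiffOn ℝ 1 q Ω)
    (hunit : ∀ z ∈ Ω, p z ^ 2 + q z ^ 2 = 1)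
    (hmin : ∀ z ∈ Ω, fderiv ℝ p z (1, 0) + fderiv ℝ q z (0, 1) = 0)
    (I : Set ℝ) (hI : Convex ℝ I)
    (c : ℝ → ℝ × ℝ) (hc : ∀ t ∈ I, c t ∈ Ω)
    (hint : ∀ t ∈ I, HasDerivAt c (q (c t), -p (c t)) t) :
    (∀ t₁ ∈ I, ∀ t₂ ∈ I, (q (c t₁), -p (c t₁)) = (q (c t₂), -p (c t₂))) ∧
    (∀ t₀ ∈ I, ∀ t ∈ I, c t = c t₀ + (t - t₀) • (q (c t₀), -p (c t₀))) := by
  have hpd : ∀ z ∈ Ω, DifferentiableAt ℝ p z := fun z hz =>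
    (hp.contDiffAt (hΩ.mem_nhds hz)).differentiableAt one_ne_zero
  have hqd : ∀ z ∈ Ω, DifferentiableAt ℝ q z := fun z hz =>
    (hq.contDiffAt (hΩ.mem_nhds hz)).differentiableAt one_ne_zero
  -- differentiated unit constraint
  have hunit' : ∀ z ∈ Ω, ∀ v : ℝ × ℝ,
      p z * fderiv ℝ p z v + q z * fderiv ℝ q z v = 0 := by
    intro z hz v
    have hD : HasFDerivAt (fun w => p w ^ 2 + q w ^ 2)
        ((2 * p z) • fderiv ℝ p z + (2 * q z) • fderiv ℝ q z) z := by
      have h1 : HasFDerivAt p (fderiv ℝ p z) z := (hpd z hz).hasFDerivAt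
      have h2 : HasFDerivAt q (fderiv ℝ q z) z := (hqd z hz).hasFDerivAt
      have h := (h1.mul h1).add (h2.mul h2)
      have hfun : (fun w => p w * p w + q w * q w) = fun w => p w ^ 2 + q w ^ 2 := by
        funext w; ring
      change HasFDerivAt (fun w => p w * p w + q w * q w) _ z at h
      rw [hfun] at h
      have e1 : (2 * p z) • fderiv ℝ p z = p z • fderiv ℝ p z + p z • fderiv ℝ p z := by
        rw [two_mul, add_smul]
      have e2 : (2 * q z) • fderiv ℝ q z = q z • fderiv ℝ q z + q z • fderiv ℝ q z := by
        rw [two_mul, add_smul]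
      rw [e1, e2]
      exact h
    have heq : (fun w => p w ^ 2 + q w ^ 2) =ᶠ[nhds z] fun _ => (1 : ℝ) := by
      filter_upwards [hΩ.mem_nhds hz] with w hw using hunit w hw
    have hconst : HasFDerivAt (fun w => p w ^ 2 + q w ^ 2) (0 : (ℝ × ℝ) →L[ℝ] ℝ) z :=
      (hasFDerivAt_const (1 : ℝ) z).congr_of_eventuallyEq heq
    have hzero := hD.unique hconst
    have := congrArg (fun L : (ℝ × ℝ) →L[ℝ] ℝ => L v) hzero
    simp at this
    nlinarith [this]
  -- derivatives of p∘c and q∘c along the curve vanish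
  have hkey : ∀ t ∈ I,
      fderiv ℝ p (c t) (q (c t), -p (c t)) = 0 ∧
      fderiv ℝ q (c t) (q (c t), -p (c t)) = 0 := by
    intro t ht
    set z := c t with hzdef
    have hz : z ∈ Ω := hc t ht
    have hux := hunit' z hz (1, 0)
    have huy := hunit' z hz (0, 1)
    have hm := hmin z hz
    have hvp : fderiv ℝ p z (q z, -p z)
        = q z * fderiv ℝ p z (1, 0) - p z * fderiv ℝ p z (0, 1) := by
      have : (q z, -p z) = q z • ((1 : ℝ), (0 : ℝ)) + (-p z) • ((0 : ℝ), (1 : ℝ)) := by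
        simp [Prod.ext_iff]
      rw [this, map_add, map_smul, map_smul, smul_eq_mul, smul_eq_mul]
      ring
    have hvq : fderiv ℝ q z (q z, -p z)
        = q z * fderiv ℝ q z (1, 0) - p z * fderiv ℝ q z (0, 1) := by
      have : (q z, -p z) = q z • ((1 : ℝ), (0 : ℝ)) + (-p z) • ((0 : ℝ), (1 : ℝ)) := by
        simp [Prod.ext_iff]
      rw [this, map_add, map_smul, map_smul, smul_eq_mul, smul_eq_mul]
      ring
    constructor
    · rw [hvp]; linear_combination q z * hm - huy
    · rw [hvq]; linear_combination hux - p z * hm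
  -- the velocity field has zero derivative along the curve
  have hF : ∀ t ∈ I, HasDerivAt (fun s => (q (c s), -p (c s))) (0 : ℝ × ℝ) t := by
    intro t ht
    have hz : c t ∈ Ω := hc t ht
    have hQ : HasDerivAt (fun s => q (c s)) (fderiv ℝ q (c t) (q (c t), -p (c t))) t :=
      (hqd (c t) hz).hasFDerivAt.comp_hasDerivAt t (hint t ht)
    have hP : HasDerivAt (fun s => p (c s)) (fderiv ℝ p (c t) (q (c t), -p (c t))) t :=
      (hpd (c t) hz).hasFDerivAt.comp_hasDerivAt t (hint t ht)
    have := hQ.prodMk hP.neg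
    rw [(hkey t ht).1, (hkey t ht).2] at this
    simpa [Prod.mk_zero_zero] using this
  have hconstV : ∀ t₁ ∈ I, ∀ t₂ ∈ I, (q (c t₁), -p (c t₁)) = (q (c t₂), -p (c t₂)) :=
    const_of_hasDerivAt_zero I hI _ hF
  refine ⟨hconstV, ?_⟩
  intro t₀ ht₀ t ht
  set v : ℝ × ℝ := (q (c t₀), -p (c t₀)) with hv
  have hg : ∀ s ∈ I, HasDerivAt (fun s => c s - s • v) (0 : ℝ × ℝ) s := by
    intro s hs
    have h1 : HasDerivAt (fun s : ℝ => s • v) v s := by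
      simpa using (hasDerivAt_id s).smul_const v
    have h2 := (hint s hs).sub h1
    have : (q (c s), -p (c s)) - v = 0 := by
      rw [hv, hconstV s hs t₀ ht₀]; simp
    rwa [this] at h2
  have := const_of_hasDerivAt_zero I hI _ hg t ht t₀ ht₀
  have hEq : c t - t • v = c t₀ - t₀ • v := this
  have : c t = c t₀ + (t - t₀) • v := by
    have := hEq
    rw [sub_smul]
    abel_nf
    abel_nf at this
    linear_combination (norm := module) this
  simpa [hv] using this
end

section
/- Let Ω ⊂ ℝ² be open, φ ∈ C_c^∞(Ω), and let G : Ω → ℝ² be a C¹ vector field whose perpendicular field G^⊥ has straight lines as integral curves, each integral curve exiting Ω in finite time in both directions. Suppose ∇φ = β·G for some C¹ function β : Ω → ℝ, and that along each integral curve of G^⊥ (parameterized with unit speed t) the equation β' = -β holds. Then β ≡ 0 and hence ∇φ ≡ 0 on each such line; in particular a compactly supported φ with ∇φ everywhere parallel to G and satisfying β' = -β must have ∇φ vanishing along every complete rule. -/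
open Set

/-- if the gradient of a compactly supported test function φ on Ω
points along a C¹ field G, the integral curves of G^⊥ are straight lines exiting
Ω in finite time in both directions, and the proportionality factor β satisfies
β' = -β along each such (unit-speed) line, then β ≡ 0 and ∇φ ≡ 0 on Ω. -/
theorem stmt4 (Ω : Set (ℝ × ℝ)) (hΩ : IsOpen Ω)
    (φ : ℝ × ℝ → ℝ) (hφ : ContDiff ℝ (⊤ : ℕ∞) φ) (hφsupp : HasCompactSupport φ)
    (hφΩ : tsupport φ ⊆ Ω)
    (G : ℝ × ℝ → ℝ × ℝ) (hG : ContDiffOn ℝ 1 G Ω)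
    (β : ℝ × ℝ → ℝ) (hβ : ContDiffOn ℝ 1 β Ω)
    -- ∇φ = β·G on Ω
    (hgrad : ∀ z ∈ Ω, (fderiv ℝ φ z (1, 0), fderiv ℝ φ z (0, 1)) = β z • G z)
    -- through each point of Ω there is a unit-speed straight integral curve of
    -- G^⊥ exiting Ω in finite time in both directions, along which β' = -β
    (hline : ∀ z ∈ Ω, ∃ w : ℝ × ℝ, dot2 w w = 1 ∧ (∃ cG : ℝ, w = cG • perp (G z)) ∧
      (∃ a b : ℝ, a < 0 ∧ 0 < b ∧ (∀ t ∈ Ioo a b, z + t • w ∈ Ω) ∧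
        z + a • w ∉ Ω ∧ z + b • w ∉ Ω) ∧
      (∀ t : ℝ, z + t • w ∈ Ω →
        HasDerivAt (fun t' => β (z + t' • w)) (-β (z + t • w)) t)) :
    ∀ z ∈ Ω, β z = 0 ∧ fderiv ℝ φ z (1, 0) = 0 ∧ fderiv ℝ φ z (0, 1) = 0 := by
  -- G never vanishes on Ω
  have hG0 : ∀ z' ∈ Ω, G z' ≠ 0 := by
    intro z' hz' h0
    obtain ⟨w', hw1', ⟨c', hc'⟩, -, -⟩ := hline z' hz'
    rw [h0] at hc'
    simp [perp, Prod.ext_iff] at hc'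
    simp [dot2, hc'.1, hc'.2] at hw1'
  intro z hz
  obtain ⟨w, hw1, -, ⟨a, b, ha, hb, hmem, hA, hB⟩, hode⟩ := hline z hz
  have hβz : β z = 0 := by
    -- pick t ∈ (0,b) with z + t•w outside tsupport φ
    have hcont : Continuous fun t : ℝ => z + t • w := by continuity
    have hBnot : z + b • w ∉ tsupport φ := fun h => hB (hφΩ h)
    have hopen : IsOpen {t : ℝ | z + t • w ∉ tsupport φ} := by
      have : {t : ℝ | z + t • w ∉ tsupport φ}
          = (fun t : ℝ => z + t • w) ⁻¹' (tsupport φ)ᶜ := rfl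
      rw [this]
      exact (isClosed_tsupport φ).isOpen_compl.preimage hcont
    obtain ⟨ε, hε, hball⟩ := Metric.isOpen_iff.mp hopen b hBnot
    set t : ℝ := max (b - ε / 2) (b / 2) with ht
    have ht0 : 0 < t := lt_max_of_lt_right (by linarith)
    have htb : t < b := max_lt (by linarith) (by linarith)
    have htball : t ∈ Metric.ball b ε := by
      have h1 : b - ε / 2 ≤ t := le_max_left _ _
      simp only [Metric.mem_ball, Real.dist_eq]
      rw [abs_lt]; constructor <;> linarith
    have htsupp : z + t • w ∉ tsupport φ := hball htball
    have htΩ : z + t • w ∈ Ω := hmem t ⟨lt_trans ha ht0, htb⟩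
    -- fderiv φ vanishes at z + t•w
    have hf0 : fderiv ℝ φ (z + t • w) = 0 := by
      have heq : φ =ᶠ[nhds (z + t • w)] 0 :=
        notMem_tsupport_iff_eventuallyEq.mp htsupp
      rw [heq.fderiv_eq]; exact fderiv_const_apply 0
    have hβt : β (z + t • w) = 0 := by
      have := hgrad (z + t • w) htΩ
      rw [hf0] at this
      simp only [ContinuousLinearMap.zero_apply] at this
      rcases smul_eq_zero.mp this.symm with h | h
      · exact h
      · exact absurd h (hG0 _ htΩ)
    -- ODE: exp s * β (z + s•w) is constant on [0,t]
    set g : ℝ → ℝ := fun s => Real.exp s * β (z + s • w) with hg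
    have hderiv : ∀ s ∈ Icc (0:ℝ) t, HasDerivAt g 0 s := by
      intro s hs
      have hsΩ : z + s • w ∈ Ω := hmem s ⟨lt_of_lt_of_le ha hs.1, lt_of_le_of_lt hs.2 htb⟩
      have h1 : HasDerivAt (fun s => Real.exp s * β (z + s • w))
          (Real.exp s * β (z + s • w) + Real.exp s * -β (z + s • w)) s :=
        (Real.hasDerivAt_exp s).mul (hode s hsΩ)
      convert h1 using 1
      ring
    have hconst : g t = g 0 := by
      have := constant_of_has_deriv_right_zero (f := g) (a := 0) (b := t)
        (fun s hs => (hderiv s hs).continuousAt.continuousWithinAt)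
        (fun s hs => ((hderiv s (Ico_subset_Icc_self hs)).hasDerivWithinAt))
      exact this t (right_mem_Icc.mpr ht0.le)
    simp only [hg, hβt, mul_zero, Real.exp_zero, zero_smul, one_mul] at hconst
    rw [add_zero] at hconst
    exact hconst.symm
  refine ⟨hβz, ?_, ?_⟩ <;>
  · have := hgrad z hz
    rw [hβz, zero_smul] at this
    have h1 := congrArg Prod.fst this
    have h2 := congrArg Prod.snd this
    simp at h1 h2
    assumption
end

section
/- Let γ : ℝ → ℝ² be C² with |γ'| = 1, κ(s) = γ''(s)·γ'(s)^⊥, and h₀ ∈ C¹. For the surface S(s,r) = (γ₁(s) + r γ₂'(s), γ₂(s) - r γ₁'(s), h₀(s) - (r/2)⟨γ(s), γ'(s)⟩), the Euclidean cross product of the coordinate tangent vectors σ = ∂S/∂s and τ = ∂S/∂r, expressed in the frame {X₁, X₂, T}, equals γ₁'(s)B(s,r)·X₁ + γ₂'(s)B(s,r)·X₂ + (-1 + rκ(s))·T, where B(s,r) = h₀'(s) - r + (1/2)⟨γ'(s), γ(s)^⊥⟩ + (r²/2)κ(s). Consequently the point S(s,r) is a characteristic point (normal purely in the T direction) if and only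 if B(s,r) = 0. -/
open Set

/-- components of a vector v ∈ ℝ³ (at the point pt) in the Heisenberg frame
{X₁ = ∂x - (y/2)∂t, X₂ = ∂y + (x/2)∂t, T = ∂t}. -/
noncomputable def frameCoords (pt v : ℝ × ℝ × ℝ) : ℝ × ℝ × ℝ :=
  (v.1, v.2.1, v.2.2 + pt.2.1 / 2 * v.1 - pt.1 / 2 * v.2.1)

/-- cross product on ℝ³ (with respect to an orthonormal frame). -/
def cross3 (u v : ℝ × ℝ × ℝ) : ℝ × ℝ × ℝ :=
  (u.2.1 * v.2.2 - u.2.2 * v.2.1, u.2.2 * v.1 - u.1 * v.2.2,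
   u.1 * v.2.1 - u.2.1 * v.1)

/-- the cross product of the coordinate tangent vectors σ = ∂S/∂s,
τ = ∂S/∂r of the ruled surface, in the frame {X₁,X₂,T}, is
γ₁'B·X₁ + γ₂'B·X₂ + (-1+rκ)·T with
B(s,r) = h₀'(s) - r + (1/2)⟨γ',γ^⊥⟩ + (r²/2)κ(s); consequently S(s,r) is a
characteristic point iff B(s,r) = 0. -/
theorem stmt8 (γ₁ γ₂ h₀ : ℝ → ℝ)
    (hγ₁ : ContDiff ℝ 2 γ₁) (hγ₂ : ContDiff ℝ 2 γ₂) (hh₀ : ContDiff ℝ 1 h₀)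
    (harc : ∀ s, (deriv γ₁ s) ^ 2 + (deriv γ₂ s) ^ 2 = 1)
    (κ : ℝ → ℝ)
    (hκ : ∀ s, κ s = deriv (deriv γ₁) s * deriv γ₂ s
      - deriv (deriv γ₂) s * deriv γ₁ s)
    (S : ℝ → ℝ → ℝ × ℝ × ℝ)
    (hS : ∀ s r, S s r = (γ₁ s + r * deriv γ₂ s, γ₂ s - r * deriv γ₁ s,
      h₀ s - r / 2 * (γ₁ s * deriv γ₁ s + γ₂ s * deriv γ₂ s)))
    (B : ℝ → ℝ → ℝ)
    (hB : ∀ s r, B s r = deriv h₀ s - r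
      + (deriv γ₁ s * γ₂ s - deriv γ₂ s * γ₁ s) / 2 + r ^ 2 / 2 * κ s) :
    ∀ s r : ℝ,
      (cross3 (frameCoords (S s r) (deriv (fun s' => S s' r) s))
          (frameCoords (S s r) (deriv (fun r' => S s r') r)) =
        (deriv γ₁ s * B s r, deriv γ₂ s * B s r, -1 + r * κ s)) ∧
      (((cross3 (frameCoords (S s r) (deriv (fun s' => S s' r) s))
            (frameCoords (S s r) (deriv (fun r' => S s r') r))).1 = 0 ∧
        (cross3 (frameCoords (S s r) (deriv (fun s' => S s' r) s))
            (frameCoords (S s r) (deriv (fun r' => S s r') r))).2.1 = 0) ↔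
        B s r = 0) := by
  have hd1 : Differentiable ℝ γ₁ := hγ₁.differentiable (by norm_num)
  have hd2 : Differentiable ℝ γ₂ := hγ₂.differentiable (by norm_num)
  have hd0 : Differentiable ℝ h₀ := hh₀.differentiable one_ne_zero
  have hc1 : ContDiff ℝ 1 (deriv γ₁) := (contDiff_succ_iff_deriv.mp
    (show ContDiff ℝ (1 + 1) γ₁ by norm_num; exact hγ₁)).2.2
  have hc2 : ContDiff ℝ 1 (deriv γ₂) := (contDiff_succ_iff_deriv.mp
    (show ContDiff ℝ (1 + 1) γ₂ by norm_num; exact hγ₂)).2.2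
  have hd1' : Differentiable ℝ (deriv γ₁) := hc1.differentiable one_ne_zero
  have hd2' : Differentiable ℝ (deriv γ₂) := hc2.differentiable one_ne_zero
  intro s r
  have H1 : HasDerivAt γ₁ (deriv γ₁ s) s := (hd1 s).hasDerivAt
  have H2 : HasDerivAt γ₂ (deriv γ₂ s) s := (hd2 s).hasDerivAt
  have H1' : HasDerivAt (deriv γ₁) (deriv (deriv γ₁) s) s := (hd1' s).hasDerivAt
  have H2' : HasDerivAt (deriv γ₂) (deriv (deriv γ₂) s) s := (hd2' s).hasDerivAt
  have H0 : HasDerivAt h₀ (deriv h₀ s) s := (hd0 s).hasDerivAt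
  have hσ : deriv (fun s' => S s' r) s
      = (deriv γ₁ s + r * deriv (deriv γ₂) s,
         deriv γ₂ s - r * deriv (deriv γ₁) s,
         deriv h₀ s - r / 2 *
           ((deriv γ₁ s * deriv γ₁ s + γ₁ s * deriv (deriv γ₁) s)
            + (deriv γ₂ s * deriv γ₂ s + γ₂ s * deriv (deriv γ₂) s))) := by
    have hh : HasDerivAt (fun s' => S s' r)
        (deriv γ₁ s + r * deriv (deriv γ₂) s,
         deriv γ₂ s - r * deriv (deriv γ₁) s,
         deriv h₀ s - r / 2 *
           ((deriv γ₁ s * deriv γ₁ s + γ₁ s * deriv (deriv γ₁) s)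
            + (deriv γ₂ s * deriv γ₂ s + γ₂ s * deriv (deriv γ₂) s))) s := by
      simp only [hS]
      exact HasDerivAt.prodMk (H1.add (H2'.const_mul r))
        (HasDerivAt.prodMk (H2.sub (H1'.const_mul r))
          (H0.sub (((H1.mul H1').add (H2.mul H2')).const_mul (r / 2))))
    exact hh.deriv
  have hτ : deriv (fun r' => S s r') r
      = (deriv γ₂ s, -(deriv γ₁ s),
         -(1 / 2 * (γ₁ s * deriv γ₁ s + γ₂ s * deriv γ₂ s))) := by
    have hc : HasDerivAt (fun r' : ℝ => r' / 2 *
        (γ₁ s * deriv γ₁ s + γ₂ s * deriv γ₂ s))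
        (1 / 2 * (γ₁ s * deriv γ₁ s + γ₂ s * deriv γ₂ s)) r := by
      simpa using ((hasDerivAt_id r).div_const 2).mul_const
        (γ₁ s * deriv γ₁ s + γ₂ s * deriv γ₂ s)
    have hh : HasDerivAt (fun r' => S s r')
        (1 * deriv γ₂ s, 0 - 1 * deriv γ₁ s,
         0 - 1 / 2 * (γ₁ s * deriv γ₁ s + γ₂ s * deriv γ₂ s)) r := by
      simp only [hS]
      exact HasDerivAt.prodMk (((hasDerivAt_id r).mul_const (deriv γ₂ s)).const_add (γ₁ s))
        (HasDerivAt.prodMk ((hasDerivAt_const r (γ₂ s)).sub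
            ((hasDerivAt_id r).mul_const (deriv γ₁ s)))
          ((hasDerivAt_const r (h₀ s)).sub hc))
    rw [hh.deriv]
    norm_num
  have key : cross3 (frameCoords (S s r) (deriv (fun s' => S s' r) s))
      (frameCoords (S s r) (deriv (fun r' => S s r') r)) =
      (deriv γ₁ s * B s r, deriv γ₂ s * B s r, -1 + r * κ s) := by
    rw [hσ, hτ, hS]
    simp only [cross3, frameCoords, Prod.mk.injEq]
    refine ⟨?_, ?_, ?_⟩
    · rw [hB, hκ]; linear_combination (-r * deriv γ₁ s) * harc s
    · rw [hB, hκ]; linear_combination (-r * deriv γ₂ s) * harc s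
    · rw [hκ]; linear_combination -harc s
  refine ⟨key, ?_⟩
  rw [key]
  constructor
  · rintro ⟨h1, h2⟩
    simp only at h1 h2
    linear_combination deriv γ₁ s * h1 + deriv γ₂ s * h2 - B s r * harc s
  · intro hB0
    simp [hB0]
end

section
/- Let m, c, d ∈ ℝ and define h(x,y) = c(x + my)/sqrt(1+m²) + (m/(1+m²))x² + ((m²-1)/(m²+1))xy - (m/(1+m²))y² + d. Then Δh = h_xx + h_yy = 0, and with p = h_x + y/2, q = h_y - x/2 one also has p_x + q_y = 0; hence the graph t = h(x,y) is a persistent H-minimal surface. -/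
open Set

lemma quad_hasFDeriv (a b A B C dd : ℝ) (z : ℝ × ℝ) :
    HasFDerivAt (fun w : ℝ × ℝ => a * w.1 + b * w.2 + A * w.1 ^ 2 + B * w.1 * w.2
        + C * w.2 ^ 2 + dd)
      (((a + 2 * A * z.1 + B * z.2) • ContinuousLinearMap.fst ℝ ℝ ℝ) +
        ((b + B * z.1 + 2 * C * z.2) • ContinuousLinearMap.snd ℝ ℝ ℝ)) z := by
  have h1 : HasFDerivAt (fun w : ℝ × ℝ => w.1) (ContinuousLinearMap.fst ℝ ℝ ℝ) z :=
    hasFDerivAt_fst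
  have h2 : HasFDerivAt (fun w : ℝ × ℝ => w.2) (ContinuousLinearMap.snd ℝ ℝ ℝ) z :=
    hasFDerivAt_snd
  have key := (((((h1.const_mul a).add (h2.const_mul b)).add
      ((h1.mul h1).const_mul A)).add ((h1.mul h2).const_mul B)).add
      ((h2.mul h2).const_mul C)).add_const dd
  refine HasFDerivAt.congr_of_eventuallyEq (key.congr_fderiv ?_) (Filter.Eventually.of_forall ?_)
  swap
  · intro w; simp only [Pi.add_apply, Pi.mul_apply]; ring
  · apply ContinuousLinearMap.ext; intro v
    simp [ContinuousLinearMap.smul_apply, ContinuousLinearMap.add_apply]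
    ring

lemma quad_fderiv (a b A B C dd : ℝ) (z : ℝ × ℝ) :
    fderiv ℝ (fun w : ℝ × ℝ => a * w.1 + b * w.2 + A * w.1 ^ 2 + B * w.1 * w.2
        + C * w.2 ^ 2 + dd) z =
      ((a + 2 * A * z.1 + B * z.2) • ContinuousLinearMap.fst ℝ ℝ ℝ) +
        ((b + B * z.1 + 2 * C * z.2) • ContinuousLinearMap.snd ℝ ℝ ℝ) :=
  (quad_hasFDeriv a b A B C dd z).fderiv

/-- the quadratic graph
h(x,y) = c(x+my)/√(1+m²) + (m/(1+m²))x² + ((m²-1)/(m²+1))xy - (m/(1+m²))y² + d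
is harmonic, and with p = h_x + y/2, q = h_y - x/2 one has p_x + q_y = 0; hence
t = h(x,y) is a persistent H-minimal surface. -/
theorem stmt12 (m c d : ℝ) (h : ℝ × ℝ → ℝ)
    (hdef : ∀ z : ℝ × ℝ, h z = c * (z.1 + m * z.2) / Real.sqrt (1 + m ^ 2)
      + m / (1 + m ^ 2) * z.1 ^ 2 + (m ^ 2 - 1) / (m ^ 2 + 1) * z.1 * z.2
      - m / (1 + m ^ 2) * z.2 ^ 2 + d)
    (p q : ℝ × ℝ → ℝ)
    (hp : ∀ z, p z = fderiv ℝ h z (1, 0) + z.2 / 2)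
    (hq : ∀ z, q z = fderiv ℝ h z (0, 1) - z.1 / 2) :
    (∀ z : ℝ × ℝ,
      fderiv ℝ (fun w => fderiv ℝ h w (1, 0)) z (1, 0) +
        fderiv ℝ (fun w => fderiv ℝ h w (0, 1)) z (0, 1) = 0) ∧
    (∀ z : ℝ × ℝ, fderiv ℝ p z (1, 0) + fderiv ℝ q z (0, 1) = 0) := by
  set s := Real.sqrt (1 + m ^ 2)
  set a := c / s
  set b := c * m / s
  set A := m / (1 + m ^ 2)
  set B := (m ^ 2 - 1) / (m ^ 2 + 1)
  set C := -(m / (1 + m ^ 2))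
  have hh : h = fun w : ℝ × ℝ => a * w.1 + b * w.2 + A * w.1 ^ 2 + B * w.1 * w.2
      + C * w.2 ^ 2 + d := by
    funext z; rw [hdef]; simp only [a, b, A, B, C]; ring
  have hd1 : ∀ z : ℝ × ℝ, fderiv ℝ h z (1, 0) = a + 2 * A * z.1 + B * z.2 := by
    intro z; rw [hh, quad_fderiv]; simp
  have hd2 : ∀ z : ℝ × ℝ, fderiv ℝ h z (0, 1) = b + B * z.1 + 2 * C * z.2 := by
    intro z; rw [hh, quad_fderiv]; simp
  have hAC : A + C = 0 := by simp [A, C]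
  constructor
  · intro z
    have e1 : (fun w => fderiv ℝ h w (1, 0)) = fun w : ℝ × ℝ =>
        (2 * A) * w.1 + B * w.2 + 0 * w.1 ^ 2 + 0 * w.1 * w.2 + 0 * w.2 ^ 2 + a := by
      funext w; rw [hd1]; ring
    have e2 : (fun w => fderiv ℝ h w (0, 1)) = fun w : ℝ × ℝ =>
        B * w.1 + (2 * C) * w.2 + 0 * w.1 ^ 2 + 0 * w.1 * w.2 + 0 * w.2 ^ 2 + b := by
      funext w; rw [hd2]; ring
    rw [e1, e2, quad_fderiv, quad_fderiv]
    simp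
    linarith
  · intro z
    have e1 : p = fun w : ℝ × ℝ =>
        (2 * A) * w.1 + (B + 1 / 2) * w.2 + 0 * w.1 ^ 2 + 0 * w.1 * w.2 + 0 * w.2 ^ 2 + a := by
      funext w; rw [hp, hd1]; ring
    have e2 : q = fun w : ℝ × ℝ =>
        (B - 1 / 2) * w.1 + (2 * C) * w.2 + 0 * w.1 ^ 2 + 0 * w.1 * w.2 + 0 * w.2 ^ 2 + b := by
      funext w; rw [hq, hd2]; ring
    rw [e1, e2, quad_fderiv, quad_fderiv]
    simp
    linarith
end

section
/- Let a, b ∈ ℝ and consider h defined on the slit plane in polar coordinates by h(ρ cos θ, ρ sin θ) = aθ + b, i.e. h(x,y) = a·arctan(y/x) + b on x > 0. Then Δh = 0; moreover for p = h_x + y/2, q = h_y - x/2, the normalized field (p̄, q̄) = (p,q)/sqrt(p²+q²) satisfies p̄_x + q̄_y = 0 wherever p² + q² ≠ 0. Hence the helicoid-type graph t = aθ + b is a persistent H-minimal surface. -/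
open Set

open Real

lemma hr2 (z : ℝ×ℝ) : HasFDerivAt (fun w : ℝ×ℝ => w.1^2 + w.2^2)
    ((2*z.1) • ContinuousLinearMap.fst ℝ ℝ ℝ + (2*z.2) • ContinuousLinearMap.snd ℝ ℝ ℝ) z := by
  have h1 := (hasDerivAt_pow 2 z.1).comp_hasFDerivAt z
    (hasFDerivAt_fst : HasFDerivAt _ (ContinuousLinearMap.fst ℝ ℝ ℝ) z)
  have h2 := (hasDerivAt_pow 2 z.2).comp_hasFDerivAt z
    (hasFDerivAt_snd : HasFDerivAt _ (ContinuousLinearMap.snd ℝ ℝ ℝ) z)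
  have h := h1.add h2
  simp only [Function.comp_def, pow_one, Nat.cast_ofNat] at h
  exact h.congr_fderiv (by ext <;> simp)

lemma val_d1 (a : ℝ) (z : ℝ×ℝ) (hz : z.1^2+z.2^2 ≠ 0) :
    fderiv ℝ (fun w : ℝ×ℝ => -(a*w.2)/(w.1^2+w.2^2)) z (1,0)
      = 2*a*z.1*z.2/(z.1^2+z.2^2)^2 := by
  have hinv := (hasDerivAt_inv hz).comp_hasFDerivAt z (hr2 z)
  have hnum : HasFDerivAt (fun w : ℝ×ℝ => -(a*w.2)) (-(a • ContinuousLinearMap.snd ℝ ℝ ℝ)) z := by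
    simpa [neg_mul] using
      ((hasFDerivAt_snd : HasFDerivAt _ (ContinuousLinearMap.snd ℝ ℝ ℝ) z)).const_mul (-a)
  have hf := hnum.mul hinv
  simp only [Function.comp_def, Pi.mul_def] at hf
  simp only [div_eq_mul_inv]
  rw [hf.fderiv]
  simp
  field_simp

lemma val_d2 (a : ℝ) (z : ℝ×ℝ) (hz : z.1^2+z.2^2 ≠ 0) :
    fderiv ℝ (fun w : ℝ×ℝ => a*w.1/(w.1^2+w.2^2)) z (0,1)
      = -(2*a*z.1*z.2)/(z.1^2+z.2^2)^2 := by
  have hinv := (hasDerivAt_inv hz).comp_hasFDerivAt z (hr2 z)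
  have hnum : HasFDerivAt (fun w : ℝ×ℝ => a*w.1) (a • ContinuousLinearMap.fst ℝ ℝ ℝ) z :=
    ((hasFDerivAt_fst : HasFDerivAt _ (ContinuousLinearMap.fst ℝ ℝ ℝ) z)).const_mul a
  have hf := hnum.mul hinv
  simp only [Function.comp_def, Pi.mul_def] at hf
  simp only [div_eq_mul_inv]
  rw [hf.fderiv]
  simp
  field_simp

lemma hasF_h (a b : ℝ) (z : ℝ×ℝ) (hz : 0 < z.1) :
    ∃ L : ℝ×ℝ →L[ℝ] ℝ, HasFDerivAt (fun w : ℝ×ℝ => a * Real.arctan (w.2 / w.1) + b) L z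
      ∧ L (1,0) = -(a*z.2)/(z.1^2+z.2^2) ∧ L (0,1) = a*z.1/(z.1^2+z.2^2) := by
  have h1 : z.1 ≠ 0 := hz.ne'
  have hdiv : HasFDerivAt (fun w : ℝ×ℝ => w.2 / w.1)
      (z.2 • -(z.1^2)⁻¹ • ContinuousLinearMap.fst ℝ ℝ ℝ
        + z.1⁻¹ • ContinuousLinearMap.snd ℝ ℝ ℝ) z := by
    have hinv := (hasDerivAt_inv h1).comp_hasFDerivAt z
      (hasFDerivAt_fst : HasFDerivAt _ (ContinuousLinearMap.fst ℝ ℝ ℝ) z)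
    simp only [Function.comp_def] at hinv
    have := (hasFDerivAt_snd : HasFDerivAt _ (ContinuousLinearMap.snd ℝ ℝ ℝ) z).mul hinv
    simp only [div_eq_mul_inv]
    exact this
  have ha := ((Real.hasDerivAt_arctan (z.2/z.1)).comp_hasFDerivAt z hdiv).const_mul a
  have hab := ha.add_const b
  refine ⟨_, hab, ?_, ?_⟩ <;>
  · simp [Function.comp_def]
    have h2 : 1 + (z.2/z.1)^2 ≠ 0 := by positivity
    field_simp

lemma val_s1 (s : ℝ) (z : ℝ×ℝ) (hz : 0 < z.1^2+z.2^2) :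
    fderiv ℝ (fun w : ℝ×ℝ => s*w.2/Real.sqrt (w.1^2+w.2^2)) z (1,0)
      = -(s*z.1*z.2)/((z.1^2+z.2^2)*Real.sqrt (z.1^2+z.2^2)) := by
  have hs : Real.sqrt (z.1^2+z.2^2) ≠ 0 := (Real.sqrt_pos.mpr hz).ne'
  have hsq := (Real.hasDerivAt_sqrt hz.ne').comp_hasFDerivAt z (hr2 z)
  have hinv := (hasDerivAt_inv hs).comp_hasFDerivAt z hsq
  have hnum : HasFDerivAt (fun w : ℝ×ℝ => s*w.2) (s • ContinuousLinearMap.snd ℝ ℝ ℝ) z :=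
    (hasFDerivAt_snd : HasFDerivAt _ (ContinuousLinearMap.snd ℝ ℝ ℝ) z).const_mul s
  have hf := hnum.mul hinv
  simp only [Function.comp_def, Pi.mul_def] at hf
  simp only [div_eq_mul_inv]
  rw [hf.fderiv]
  simp
  rw [Real.sq_sqrt hz.le]
  ring

lemma val_s2 (s : ℝ) (z : ℝ×ℝ) (hz : 0 < z.1^2+z.2^2) :
    fderiv ℝ (fun w : ℝ×ℝ => -(s*w.1)/Real.sqrt (w.1^2+w.2^2)) z (0,1)
      = s*z.1*z.2/((z.1^2+z.2^2)*Real.sqrt (z.1^2+z.2^2)) := by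
  have hs : Real.sqrt (z.1^2+z.2^2) ≠ 0 := (Real.sqrt_pos.mpr hz).ne'
  have hsq := (Real.hasDerivAt_sqrt hz.ne').comp_hasFDerivAt z (hr2 z)
  have hinv := (hasDerivAt_inv hs).comp_hasFDerivAt z hsq
  have hnum : HasFDerivAt (fun w : ℝ×ℝ => -(s*w.1)) (-(s • ContinuousLinearMap.fst ℝ ℝ ℝ)) z := by
    simpa [neg_mul] using
      ((hasFDerivAt_fst : HasFDerivAt _ (ContinuousLinearMap.fst ℝ ℝ ℝ) z)).const_mul (-s)
  have hf := hnum.mul hinv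
  simp only [Function.comp_def, Pi.mul_def] at hf
  simp only [div_eq_mul_inv]
  rw [hf.fderiv]
  simp
  rw [Real.sq_sqrt hz.le]
  ring

/-- the helicoid-type graph h(x,y) = a·arctan(y/x) + b on the
half-plane x > 0 is harmonic, and the normalized field
(p̄,q̄) = (p,q)/√(p²+q²) (p = h_x + y/2, q = h_y - x/2) is divergence free
wherever p² + q² ≠ 0; hence t = aθ + b is a persistent H-minimal surface. -/
theorem stmt13 (a b : ℝ) (h : ℝ × ℝ → ℝ)
    (hdef : ∀ z : ℝ × ℝ, 0 < z.1 → h z = a * Real.arctan (z.2 / z.1) + b)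
    (p q : ℝ × ℝ → ℝ)
    (hp : ∀ z, p z = fderiv ℝ h z (1, 0) + z.2 / 2)
    (hq : ∀ z, q z = fderiv ℝ h z (0, 1) - z.1 / 2) :
    ∀ z : ℝ × ℝ, 0 < z.1 →
      (fderiv ℝ (fun w => fderiv ℝ h w (1, 0)) z (1, 0) +
        fderiv ℝ (fun w => fderiv ℝ h w (0, 1)) z (0, 1) = 0) ∧
      (p z ^ 2 + q z ^ 2 ≠ 0 →
        fderiv ℝ (fun w => p w / Real.sqrt (p w ^ 2 + q w ^ 2)) z (1, 0) +
          fderiv ℝ (fun w => q w / Real.sqrt (p w ^ 2 + q w ^ 2)) z (0, 1) = 0) := by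
  intro z hz
  have hopen : IsOpen {w : ℝ×ℝ | 0 < w.1} := isOpen_lt continuous_const continuous_fst
  have hval : ∀ w : ℝ×ℝ, 0 < w.1 → fderiv ℝ h w (1,0) = -(a*w.2)/(w.1^2+w.2^2)
      ∧ fderiv ℝ h w (0,1) = a*w.1/(w.1^2+w.2^2) := by
    intro w hw
    obtain ⟨L, hL, hL1, hL2⟩ := hasF_h a b w hw
    have heq : h =ᶠ[nhds w] fun w' => a * Real.arctan (w'.2/w'.1) + b :=
      Filter.eventuallyEq_of_mem (hopen.mem_nhds hw) (fun x hx => hdef x hx)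
    rw [heq.fderiv_eq, hL.fderiv]
    exact ⟨hL1, hL2⟩
  have hr2pos : 0 < z.1^2 + z.2^2 := by positivity
  constructor
  · have he1 : (fun w => fderiv ℝ h w (1,0)) =ᶠ[nhds z] fun w => -(a*w.2)/(w.1^2+w.2^2) :=
      Filter.eventuallyEq_of_mem (hopen.mem_nhds hz) (fun w hw => (hval w hw).1)
    have he2 : (fun w => fderiv ℝ h w (0,1)) =ᶠ[nhds z] fun w => a*w.1/(w.1^2+w.2^2) :=
      Filter.eventuallyEq_of_mem (hopen.mem_nhds hz) (fun w hw => (hval w hw).2)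
    rw [he1.fderiv_eq, he2.fderiv_eq, val_d1 a z hr2pos.ne', val_d2 a z hr2pos.ne']
    ring
  · intro hpq
    set c : ℝ×ℝ → ℝ := fun w => 1/2 - a/(w.1^2+w.2^2) with hcdef
    have hpqw : ∀ w : ℝ×ℝ, 0 < w.1 → p w = w.2 * c w ∧ q w = -(w.1 * c w) := by
      intro w hw
      have hr : (w.1^2+w.2^2) ≠ 0 := by positivity
      constructor
      · rw [hp w, (hval w hw).1, hcdef]; field_simp; ring
      · rw [hq w, (hval w hw).2, hcdef]; field_simp; ring
    obtain ⟨hpz, hqz⟩ := hpqw z hz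
    have hcz : c z ≠ 0 := by
      intro h0
      apply hpq
      rw [hpz, hqz, h0]; ring
    set s : ℝ := if 0 < c z then 1 else -1 with hsdef
    have hs1 : s = 1 ∨ s = -1 := by rw [hsdef]; split <;> simp
    have hsc : 0 < s * c z := by
      rw [hsdef]; split
      · simpa
      · rename_i hneg
        push_neg at hneg
        have := lt_of_le_of_ne hneg hcz
        nlinarith
    have hcont : ContinuousAt (fun w => s * c w) z := by
      rw [hcdef]
      apply ContinuousAt.mul continuousAt_const
      apply ContinuousAt.sub continuousAt_const
      exact ContinuousAt.div continuousAt_const (by fun_prop) hr2pos.ne'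
    have hevc : ∀ᶠ w in nhds z, s * c w ∈ Set.Ioi (0:ℝ) :=
      hcont.eventually_mem (Ioi_mem_nhds hsc)
    have hevx : ∀ᶠ w in nhds z, w ∈ {w : ℝ×ℝ | 0 < w.1} := hopen.mem_nhds hz
    have key : ∀ w : ℝ×ℝ, 0 < s * c w → 0 < w.1 →
        p w / Real.sqrt (p w^2 + q w^2) = s*w.2/Real.sqrt (w.1^2+w.2^2)
        ∧ q w / Real.sqrt (p w^2 + q w^2) = -(s*w.1)/Real.sqrt (w.1^2+w.2^2) := by
      intro w hw1 hw2
      obtain ⟨hpw, hqw⟩ := hpqw w hw2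
      have hrw : 0 < w.1^2+w.2^2 := by positivity
      have hsr : Real.sqrt (w.1^2+w.2^2) ≠ 0 := (Real.sqrt_pos.mpr hrw).ne'
      have hcw : c w ≠ 0 := by
        intro h0; rw [h0] at hw1; simp at hw1
      have hsq : p w^2 + q w^2 = (c w)^2 * (w.1^2+w.2^2) := by rw [hpw, hqw]; ring
      have habs : Real.sqrt (p w^2+q w^2) = (s * c w) * Real.sqrt (w.1^2+w.2^2) := by
        rw [hsq, Real.sqrt_mul (sq_nonneg _), Real.sqrt_sq_eq_abs]
        congr 1
        rcases hs1 with hs|hs <;> rw [hs] at hw1 ⊢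
        · rw [abs_of_pos (by linarith)]; ring
        · have : c w < 0 := by nlinarith
          rw [abs_of_neg this]; ring
      rw [habs, hpw, hqw]
      rcases hs1 with hs|hs <;> rw [hs] <;> constructor <;> field_simp <;> ring
    have hevF : (fun w => p w / Real.sqrt (p w^2 + q w^2))
        =ᶠ[nhds z] fun w => s*w.2/Real.sqrt (w.1^2+w.2^2) := by
      filter_upwards [hevc, hevx] with w hw1 hw2
      exact (key w hw1 hw2).1
    have hevG : (fun w => q w / Real.sqrt (p w^2 + q w^2))
        =ᶠ[nhds z] fun w => -(s*w.1)/Real.sqrt (w.1^2+w.2^2) := by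
      filter_upwards [hevc, hevx] with w hw1 hw2
      exact (key w hw1 hw2).2
    rw [hevF.fderiv_eq, hevG.fderiv_eq, val_s1 s z hr2pos, val_s2 s z hr2pos]
    ring
end

section
/- Let h(x,y) be a C² function on a domain Ω, p = h_x + y/2, q = h_y - x/2, and write (p,q) = α·(p̄,q̄) with α = sqrt(p²+q²) > 0 and (p̄,q̄) unit. If p̄_x + q̄_y = 0 on Ω (H-minimality), then Δh = p_x + q_y = ∇α · (p̄, q̄). Consequently, h is harmonic on Ω if and only if α is constant along the integral curves of the unit horizontal Gauss map (p̄, q̄). -/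
open Set

/-- if t = h(x,y) is a noncharacteristic C² H-minimal graph with
(p,q) = α(p̄,q̄), α = √(p²+q²) > 0, then Δh = p_x + q_y = ∇α·(p̄,q̄); hence h is
harmonic on Ω iff α is constant along the integral curves of (p̄,q̄), i.e. iff
the directional derivative ∇α·(p̄,q̄) vanishes on Ω. -/
theorem stmt14 (Ω : Set (ℝ × ℝ)) (hΩ : IsOpen Ω)
    (h : ℝ × ℝ → ℝ) (hh : ContDiffOn ℝ 2 h Ω)
    (p q α pb qb : ℝ × ℝ → ℝ)
    (hp : ∀ z ∈ Ω, p z = fderiv ℝ h z (1, 0) + z.2 / 2)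
    (hq : ∀ z ∈ Ω, q z = fderiv ℝ h z (0, 1) - z.1 / 2)
    (hα : ∀ z ∈ Ω, α z = Real.sqrt (p z ^ 2 + q z ^ 2))
    (hαpos : ∀ z ∈ Ω, 0 < α z)
    (hpb : ∀ z ∈ Ω, pb z = p z / α z) (hqb : ∀ z ∈ Ω, qb z = q z / α z)
    (hmin : ∀ z ∈ Ω, fderiv ℝ pb z (1, 0) + fderiv ℝ qb z (0, 1) = 0) :
    (∀ z ∈ Ω,
      fderiv ℝ (fun w => fderiv ℝ h w (1, 0)) z (1, 0) +
          fderiv ℝ (fun w => fderiv ℝ h w (0, 1)) z (0, 1)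
        = fderiv ℝ p z (1, 0) + fderiv ℝ q z (0, 1) ∧
      fderiv ℝ p z (1, 0) + fderiv ℝ q z (0, 1)
        = fderiv ℝ α z (pb z, qb z)) ∧
    ((∀ z ∈ Ω,
        fderiv ℝ (fun w => fderiv ℝ h w (1, 0)) z (1, 0) +
          fderiv ℝ (fun w => fderiv ℝ h w (0, 1)) z (0, 1) = 0) ↔
      (∀ z ∈ Ω, fderiv ℝ α z (pb z, qb z) = 0)) := by
  have key : ∀ z ∈ Ω,
      fderiv ℝ (fun w => fderiv ℝ h w (1, 0)) z (1, 0) +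
          fderiv ℝ (fun w => fderiv ℝ h w (0, 1)) z (0, 1)
        = fderiv ℝ p z (1, 0) + fderiv ℝ q z (0, 1) ∧
      fderiv ℝ p z (1, 0) + fderiv ℝ q z (0, 1)
        = fderiv ℝ α z (pb z, qb z) := by
    intro z hz
    have hmem : Ω ∈ nhds z := hΩ.mem_nhds hz
    -- differentiability of the first partials
    have hfd : ContDiffOn ℝ 1 (fun w => fderiv ℝ h w) Ω :=
      hh.fderiv_of_isOpen hΩ (by norm_num)
    have d1 : DifferentiableAt ℝ (fun w => fderiv ℝ h w (1, 0)) z := by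
      have : ContDiffOn ℝ 1 (fun w => fderiv ℝ h w (1, 0)) Ω :=
        hfd.clm_apply contDiffOn_const
      exact (this.differentiableOn one_ne_zero).differentiableAt hmem
    have d2 : DifferentiableAt ℝ (fun w => fderiv ℝ h w (0, 1)) z := by
      have : ContDiffOn ℝ 1 (fun w => fderiv ℝ h w (0, 1)) Ω :=
        hfd.clm_apply contDiffOn_const
      exact (this.differentiableOn one_ne_zero).differentiableAt hmem
    -- the nice representatives
    set P : ℝ × ℝ → ℝ := fun w => fderiv ℝ h w (1, 0) + w.2 / 2 with hPdef
    set Q : ℝ × ℝ → ℝ := fun w => fderiv ℝ h w (0, 1) - w.1 / 2 with hQdef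
    set A : ℝ × ℝ → ℝ := fun w => Real.sqrt (P w ^ 2 + Q w ^ 2) with hAdef
    have eαΩ : ∀ w ∈ Ω, α w = A w := fun w hw => by
      simp only [hAdef, hPdef, hQdef]
      rw [hα w hw, ← hp w hw, ← hq w hw]
    have ep : p =ᶠ[nhds z] P := Filter.eventuallyEq_of_mem hmem (fun w hw => hp w hw)
    have eq' : q =ᶠ[nhds z] Q := Filter.eventuallyEq_of_mem hmem (fun w hw => hq w hw)
    have eα : α =ᶠ[nhds z] A := Filter.eventuallyEq_of_mem hmem eαΩ
    have hPz : P z = p z := (hp z hz).symm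
    have hQz : Q z = q z := (hq z hz).symm
    have hAz : A z = α z := (eαΩ z hz).symm
    have haz : (0:ℝ) < α z := hαpos z hz
    have hAz0 : A z ≠ 0 := by rw [hAz]; exact ne_of_gt haz
    -- derivatives of the affine parts
    have hs2 : HasFDerivAt (fun w : ℝ × ℝ => w.2 / 2)
        ((2:ℝ)⁻¹ • ContinuousLinearMap.snd ℝ ℝ ℝ) z := by
      exact ((hasFDerivAt_snd (𝕜 := ℝ) (E := ℝ) (F := ℝ) (p := z)).const_smul (2:ℝ)⁻¹).congr_of_eventuallyEq
        (Filter.Eventually.of_forall fun w => by simp [div_eq_inv_mul])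
    have hs1 : HasFDerivAt (fun w : ℝ × ℝ => w.1 / 2)
        ((2:ℝ)⁻¹ • ContinuousLinearMap.fst ℝ ℝ ℝ) z := by
      exact ((hasFDerivAt_fst (𝕜 := ℝ) (E := ℝ) (F := ℝ) (p := z)).const_smul (2:ℝ)⁻¹).congr_of_eventuallyEq
        (Filter.Eventually.of_forall fun w => by simp [div_eq_inv_mul])
    set D1 := fderiv ℝ (fun w => fderiv ℝ h w (1, 0)) z with hD1
    set D2 := fderiv ℝ (fun w => fderiv ℝ h w (0, 1)) z with hD2
    have hPd : HasFDerivAt P (D1 + (2:ℝ)⁻¹ • ContinuousLinearMap.snd ℝ ℝ ℝ) z :=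
      d1.hasFDerivAt.add hs2
    have hQd : HasFDerivAt Q (D2 - (2:ℝ)⁻¹ • ContinuousLinearMap.fst ℝ ℝ ℝ) z :=
      d2.hasFDerivAt.sub hs1
    have hfp : fderiv ℝ p z = D1 + (2:ℝ)⁻¹ • ContinuousLinearMap.snd ℝ ℝ ℝ := by
      rw [ep.fderiv_eq]; exact hPd.fderiv
    have hfq : fderiv ℝ q z = D2 - (2:ℝ)⁻¹ • ContinuousLinearMap.fst ℝ ℝ ℝ := by
      rw [eq'.fderiv_eq]; exact hQd.fderiv
    have hpx : fderiv ℝ p z (1, 0) = D1 (1, 0) := by rw [hfp]; simp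
    have hqy : fderiv ℝ q z (0, 1) = D2 (0, 1) := by rw [hfq]; simp
    refine ⟨by rw [hpx, hqy], ?_⟩
    -- differentiability of A = sqrt(P² + Q²)
    have dinner : DifferentiableAt ℝ (fun w => P w ^ 2 + Q w ^ 2) z :=
      (hPd.differentiableAt.pow 2).add (hQd.differentiableAt.pow 2)
    have hinner0 : P z ^ 2 + Q z ^ 2 ≠ 0 := by
      intro h0
      apply hAz0
      show Real.sqrt (P z ^ 2 + Q z ^ 2) = 0
      rw [h0, Real.sqrt_zero]
    have dA : DifferentiableAt ℝ A z := dinner.sqrt hinner0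
    set A' := fderiv ℝ α z with hA'
    have hAd : HasFDerivAt A A' z := by
      rw [hA', eα.fderiv_eq]; exact dA.hasFDerivAt
    -- derivative of 1/A
    have hAinv : HasFDerivAt (fun w => (A w)⁻¹) ((-(A z ^ 2)⁻¹) • A') z := by
      exact (hasDerivAt_inv hAz0).comp_hasFDerivAt z hAd
    -- pb = P / A and qb = Q / A near z
    have epb : pb =ᶠ[nhds z] fun w => P w * (A w)⁻¹ :=
      Filter.eventuallyEq_of_mem hmem (fun w hw => by
        rw [hpb w hw, hp w hw, eαΩ w hw, div_eq_mul_inv])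
    have eqb : qb =ᶠ[nhds z] fun w => Q w * (A w)⁻¹ :=
      Filter.eventuallyEq_of_mem hmem (fun w hw => by
        rw [hqb w hw, hq w hw, eαΩ w hw, div_eq_mul_inv])
    have hPbd : HasFDerivAt (fun w => P w * (A w)⁻¹)
        (P z • ((-(A z ^ 2)⁻¹) • A')
          + (A z)⁻¹ • (D1 + (2:ℝ)⁻¹ • ContinuousLinearMap.snd ℝ ℝ ℝ)) z :=
      hPd.mul hAinv
    have hQbd : HasFDerivAt (fun w => Q w * (A w)⁻¹)
        (Q z • ((-(A z ^ 2)⁻¹) • A')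
          + (A z)⁻¹ • (D2 - (2:ℝ)⁻¹ • ContinuousLinearMap.fst ℝ ℝ ℝ)) z :=
      hQd.mul hAinv
    have hfpb : fderiv ℝ pb z
        = P z • ((-(A z ^ 2)⁻¹) • A')
          + (A z)⁻¹ • (D1 + (2:ℝ)⁻¹ • ContinuousLinearMap.snd ℝ ℝ ℝ) := by
      rw [epb.fderiv_eq]; exact hPbd.fderiv
    have hfqb : fderiv ℝ qb z
        = Q z • ((-(A z ^ 2)⁻¹) • A')
          + (A z)⁻¹ • (D2 - (2:ℝ)⁻¹ • ContinuousLinearMap.fst ℝ ℝ ℝ) := by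
      rw [eqb.fderiv_eq]; exact hQbd.fderiv
    -- the minimality equation, scalar form
    have mineq := hmin z hz
    rw [hfpb, hfqb] at mineq
    simp only [ContinuousLinearMap.add_apply, ContinuousLinearMap.coe_smul',
      Pi.smul_apply, ContinuousLinearMap.coe_sub', Pi.sub_apply,
      ContinuousLinearMap.coe_snd', ContinuousLinearMap.coe_fst',
      smul_eq_mul, hPz, hQz, hAz] at mineq
    -- evaluate ∇α at (pb z, qb z)
    have hvec : ((pb z, qb z) : ℝ × ℝ)
        = pb z • ((1:ℝ), (0:ℝ)) + qb z • ((0:ℝ), (1:ℝ)) := by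
      simp [Prod.ext_iff]
    have hAeval : A' (pb z, qb z) = pb z * A' (1, 0) + qb z * A' (0, 1) := by
      rw [hvec, map_add, map_smul, map_smul, smul_eq_mul, smul_eq_mul]
    rw [hAeval, hpx, hqy, hpb z hz, hqb z hz]
    have haz0 : α z ≠ 0 := ne_of_gt haz
    have final : ∀ a pz qz ax ay u v : ℝ, a ≠ 0 →
        pz * (-(a ^ 2)⁻¹ * ax) + a⁻¹ * (u + 2⁻¹ * 0) +
          (qz * (-(a ^ 2)⁻¹ * ay) + a⁻¹ * (v - 2⁻¹ * 0)) = 0 →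
        u + v = pz / a * ax + qz / a * ay := by
      intro a pz qz ax ay u v ha hm
      field_simp at hm ⊢
      rcases mul_eq_zero.mp (show ((u + v) * a - (pz * ax + qz * ay)) * a = 0 by
        linear_combination (a / 2) * hm) with h0 | h0
      · linear_combination h0
      · exact absurd h0 ha
    exact final _ _ _ _ _ _ _ haz0 mineq
  refine ⟨key, ?_⟩
  constructor
  · intro H z hz
    have hk := key z hz
    rw [← hk.2, ← hk.1]
    exact H z hz
  · intro H z hz
    have hk := key z hz
    rw [hk.1, hk.2]
    exact H z hz
end

section
/- Let c : (-ε, ε) → ℝ³ be a C² curve with c(0) = 0, and suppose φ : (-ε, ε) → ℝ is C¹ with φ(0) = 0 and satisfies c₃(φ(t)) - c₃(t) - (1/2)⟨c̄(φ(t)), c̄(t)^⊥⟩ = 0 for all t, where c̄ = (c₁, c₂). If c₃''(0) ≠ 0 then φ'(0)² = 1. -/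
open Set Filter Topology

private lemma slope_lim16 {f : ℝ → ℝ} {L : ℝ} (h0 : f 0 = 0) (h : HasDerivAt f L 0) :
    Tendsto (fun t => f t / t) (𝓝[≠] (0:ℝ)) (𝓝 L) := by
  have h' := hasDerivAt_iff_tendsto_slope.mp h
  refine h'.congr (fun t => ?_)
  simp [slope_def_field, h0]

/-- if c is a C² curve with c(0) = 0 and φ is a C¹ rule-pairing
map with φ(0) = 0 satisfying the horizontality relation
c₃(φ(t)) - c₃(t) - ½(c₁(φ(t))c₂(t) - c₂(φ(t))c₁(t)) = 0 on (-ε,ε), and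
c₃''(0) ≠ 0, then φ'(0)² = 1. -/
theorem stmt16 (ε : ℝ) (hε : 0 < ε)
    (c : ℝ → ℝ × ℝ × ℝ) (hc : ContDiff ℝ 2 c) (hc0 : c 0 = 0)
    (φ : ℝ → ℝ) (hφ : ContDiff ℝ 1 φ) (hφ0 : φ 0 = 0)
    (hφmaps : ∀ t ∈ Ioo (-ε) ε, φ t ∈ Ioo (-ε) ε)
    (hrel : ∀ t ∈ Ioo (-ε) ε,
      (c (φ t)).2.2 - (c t).2.2
        - 1 / 2 * ((c (φ t)).1 * (c t).2.1 - (c (φ t)).2.1 * (c t).1) = 0)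
    (hc3 : deriv (deriv (fun t => (c t).2.2)) 0 ≠ 0) :
    deriv φ 0 ^ 2 = 1 := by
  set a : ℝ → ℝ := fun t => (c t).2.2 with ha_def
  set b : ℝ → ℝ := fun t => (c t).1 with hb_def
  set d : ℝ → ℝ := fun t => (c t).2.1 with hd_def
  have ha : ContDiff ℝ 2 a := hc.snd.snd
  have hb : ContDiff ℝ 2 b := hc.fst
  have hd : ContDiff ℝ 2 d := hc.snd.fst
  have ha0 : a 0 = 0 := by simp [ha_def, hc0]
  have hb0 : b 0 = 0 := by simp [hb_def, hc0]
  have hd0 : d 0 = 0 := by simp [hd_def, hc0]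
  have hφd : Differentiable ℝ φ := hφ.differentiable one_ne_zero
  have had : Differentiable ℝ a := ha.differentiable two_ne_zero
  have hbd : Differentiable ℝ b := hb.differentiable two_ne_zero
  have hdd : Differentiable ℝ d := hd.differentiable two_ne_zero
  have ha' : ContDiff ℝ 1 (deriv a) := by
    have h2 : ContDiff ℝ ((1:WithTop ℕ∞)+1) a := by norm_num; exact ha
    exact (contDiff_succ_iff_deriv.mp h2).2.2
  have hb' : ContDiff ℝ 1 (deriv b) := by
    have h2 : ContDiff ℝ ((1:WithTop ℕ∞)+1) b := by norm_num; exact hb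
    exact (contDiff_succ_iff_deriv.mp h2).2.2
  have hd' : ContDiff ℝ 1 (deriv d) := by
    have h2 : ContDiff ℝ ((1:WithTop ℕ∞)+1) d := by norm_num; exact hd
    exact (contDiff_succ_iff_deriv.mp h2).2.2
  have hφ' : Continuous (deriv φ) := by
    have h2 : ContDiff ℝ ((0:WithTop ℕ∞)+1) φ := by norm_num; exact hφ
    exact (contDiff_succ_iff_deriv.mp h2).2.2.continuous
  -- the derivative of the relation
  set G : ℝ → ℝ := fun t =>
    deriv a (φ t) * deriv φ t - deriv a t
      - 1 / 2 * ((deriv b (φ t) * deriv φ t) * d t + b (φ t) * deriv d t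
        - ((deriv d (φ t) * deriv φ t) * b t + d (φ t) * deriv b t)) with hG_def
  set F : ℝ → ℝ := fun s => a (φ s) - a s - 1/2 * (b (φ s) * d s - d (φ s) * b s)
    with hF_def
  have hF : ∀ t, HasDerivAt F (G t) t := by
    intro t
    have hφt : HasDerivAt φ (deriv φ t) t := (hφd t).hasDerivAt
    have h1 : HasDerivAt (fun s => a (φ s)) (deriv a (φ t) * deriv φ t) t :=
      ((had (φ t)).hasDerivAt).comp t hφt
    have h2 : HasDerivAt a (deriv a t) t := (had t).hasDerivAt
    have h3 : HasDerivAt (fun s => b (φ s)) (deriv b (φ t) * deriv φ t) t :=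
      ((hbd (φ t)).hasDerivAt).comp t hφt
    have h4 : HasDerivAt (fun s => d (φ s)) (deriv d (φ t) * deriv φ t) t :=
      ((hdd (φ t)).hasDerivAt).comp t hφt
    have h5 : HasDerivAt b (deriv b t) t := (hbd t).hasDerivAt
    have h6 : HasDerivAt d (deriv d t) t := (hdd t).hasDerivAt
    exact (h1.sub h2).sub (((h3.mul h6).sub (h4.mul h5)).const_mul (1/2))
  have hGzero : ∀ t ∈ Ioo (-ε) ε, G t = 0 := by
    intro t ht
    have hmem : Ioo (-ε) ε ∈ 𝓝 t := isOpen_Ioo.mem_nhds ht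
    have heq : F =ᶠ[𝓝 t] fun _ => (0:ℝ) := by
      filter_upwards [hmem] with s hs
      exact hrel s hs
    have : HasDerivAt (fun _ => (0:ℝ)) (G t) t := (hF t).congr_of_eventuallyEq heq.symm
    have h0' : HasDerivAt (fun _ => (0:ℝ)) 0 t := hasDerivAt_const t 0
    exact this.unique h0'
  have h0mem : (0:ℝ) ∈ Ioo (-ε) ε := by constructor <;> simp [hε, neg_lt_zero.mpr hε]
  set m := deriv φ 0 with hm_def
  by_cases hA : deriv a 0 = 0
  · -- hard case: look at G t / t as t → 0
    set L := deriv (deriv a) 0 with hL_def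
    have hda0 : HasDerivAt (deriv a) L 0 := (ha'.differentiable one_ne_zero 0).hasDerivAt
    have hdb0 : HasDerivAt (deriv b) (deriv (deriv b) 0) 0 :=
      (hb'.differentiable one_ne_zero 0).hasDerivAt
    have hφ0' : HasDerivAt φ m 0 := (hφd 0).hasDerivAt
    have hdaφ : HasDerivAt (fun t => deriv a (φ t)) (L * m) 0 := by
      have : HasDerivAt (deriv a) L (φ 0) := by rw [hφ0]; exact hda0
      exact this.comp 0 hφ0'
    have t1 : Tendsto (fun t => deriv a (φ t) / t) (𝓝[≠] (0:ℝ)) (𝓝 (L * m)) :=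
      slope_lim16 (by simp [hφ0, hA]) hdaφ
    have t2 : Tendsto (fun t => deriv a t / t) (𝓝[≠] (0:ℝ)) (𝓝 L) := slope_lim16 hA hda0
    set b' := deriv b 0 with hb'_def
    set d' := deriv d 0 with hd'_def
    have hbh : HasDerivAt b b' 0 := (hbd 0).hasDerivAt
    have hdh : HasDerivAt d d' 0 := (hdd 0).hasDerivAt
    have hbφ : HasDerivAt (fun t => b (φ t)) (b' * m) 0 := by
      have : HasDerivAt b b' (φ 0) := by rw [hφ0]; exact hbh
      exact this.comp 0 hφ0'
    have hdφ : HasDerivAt (fun t => d (φ t)) (d' * m) 0 := by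
      have : HasDerivAt d d' (φ 0) := by rw [hφ0]; exact hdh
      exact this.comp 0 hφ0'
    have t3 : Tendsto (fun t => b (φ t) / t) (𝓝[≠] (0:ℝ)) (𝓝 (b' * m)) :=
      slope_lim16 (by simp [hφ0, hb0]) hbφ
    have t4 : Tendsto (fun t => b t / t) (𝓝[≠] (0:ℝ)) (𝓝 b') := slope_lim16 hb0 hbh
    have t5 : Tendsto (fun t => d (φ t) / t) (𝓝[≠] (0:ℝ)) (𝓝 (d' * m)) :=
      slope_lim16 (by simp [hφ0, hd0]) hdφ
    have t6 : Tendsto (fun t => d t / t) (𝓝[≠] (0:ℝ)) (𝓝 d') := slope_lim16 hd0 hdh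
    -- continuity facts
    have cφ' : Tendsto (deriv φ) (𝓝[≠] (0:ℝ)) (𝓝 m) :=
      (hφ'.continuousAt.tendsto).mono_left nhdsWithin_le_nhds
    have cφ : Tendsto φ (𝓝[≠] (0:ℝ)) (𝓝 (0:ℝ)) := by
      have := hφ.continuous.continuousAt (x := (0:ℝ))
      rw [ContinuousAt, hφ0] at this
      exact this.mono_left nhdsWithin_le_nhds
    have cbφ' : Tendsto (fun t => deriv b (φ t)) (𝓝[≠] (0:ℝ)) (𝓝 b') := by
      have := (hb'.continuous.continuousAt (x := (0:ℝ))).tendsto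
      exact this.comp cφ
    have cdφ' : Tendsto (fun t => deriv d (φ t)) (𝓝[≠] (0:ℝ)) (𝓝 d') := by
      have := (hd'.continuous.continuousAt (x := (0:ℝ))).tendsto
      exact this.comp cφ
    have cb' : Tendsto (deriv b) (𝓝[≠] (0:ℝ)) (𝓝 b') :=
      (hb'.continuous.continuousAt.tendsto).mono_left nhdsWithin_le_nhds
    have cd' : Tendsto (deriv d) (𝓝[≠] (0:ℝ)) (𝓝 d') :=
      (hd'.continuous.continuousAt.tendsto).mono_left nhdsWithin_le_nhds
    -- combine
    have hcomb : Tendsto (fun t => (deriv a (φ t) / t) * deriv φ t - deriv a t / t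
        - 1 / 2 * ((deriv b (φ t) * deriv φ t) * (d t / t) + (b (φ t) / t) * deriv d t
          - ((deriv d (φ t) * deriv φ t) * (b t / t) + (d (φ t) / t) * deriv b t)))
        (𝓝[≠] (0:ℝ))
        (𝓝 ((L * m) * m - L - 1 / 2 * ((b' * m) * d' + (b' * m) * d'
          - ((d' * m) * b' + (d' * m) * b')))) := by
      exact ((t1.mul cφ').sub t2).sub
        (Tendsto.const_mul (1/2 : ℝ)
          (((((cbφ'.mul cφ').mul t6).add (t3.mul cd')).sub
            (((cdφ'.mul cφ').mul t4).add (t5.mul cb')))))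
    have heq : (fun t => G t / t) =ᶠ[𝓝[≠] (0:ℝ)]
        (fun t => (deriv a (φ t) / t) * deriv φ t - deriv a t / t
          - 1 / 2 * ((deriv b (φ t) * deriv φ t) * (d t / t) + (b (φ t) / t) * deriv d t
            - ((deriv d (φ t) * deriv φ t) * (b t / t) + (d (φ t) / t) * deriv b t))) := by
      filter_upwards [self_mem_nhdsWithin] with t ht
      have ht' : t ≠ 0 := ht
      simp only [hG_def]
      field_simp
    have hGlim : Tendsto (fun t => G t / t) (𝓝[≠] (0:ℝ))
        (𝓝 ((L * m) * m - L - 1 / 2 * ((b' * m) * d' + (b' * m) * d'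
          - ((d' * m) * b' + (d' * m) * b')))) := hcomb.congr' heq.symm
    have hzero : Tendsto (fun t => G t / t) (𝓝[≠] (0:ℝ)) (𝓝 (0:ℝ)) := by
      have hmem : Ioo (-ε) ε ∈ 𝓝[≠] (0:ℝ) :=
        mem_nhdsWithin_of_mem_nhds (isOpen_Ioo.mem_nhds h0mem)
      have : (fun t => G t / t) =ᶠ[𝓝[≠] (0:ℝ)] (fun _ => (0:ℝ)) := by
        filter_upwards [hmem] with t ht
        rw [hGzero t ht, zero_div]
      exact tendsto_const_nhds.congr' this.symm
    have huniq := tendsto_nhds_unique hGlim hzero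
    have hfin : L * (m ^ 2 - 1) = 0 := by
      linear_combination huniq
    have hL : L ≠ 0 := hc3
    have := (mul_eq_zero.mp hfin).resolve_left hL
    linarith [this]
  · -- easy case: G 0 = 0 forces deriv φ 0 = 1
    have hG0 := hGzero 0 h0mem
    simp only [hG_def, hφ0, hb0, hd0, mul_zero, zero_mul, add_zero, zero_add,
      sub_zero] at hG0
    have hm' : deriv a 0 * (m - 1) = 0 := by
      rw [hm_def]; linear_combination hG0
    have hm1 : m - 1 = 0 := (mul_eq_zero.mp hm').resolve_left hA
    have hm : m = 1 := by linarith
    rw [hm]; norm_num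
end

section
/- Let Ω ⊂ ℝⁿ be compact, X continuous on Ω with modulus of continuity C (non-decreasing, continuous, C(0) = 0), and X_k continuous with sup_Ω |X_k - X| ≤ M_k. Define Picard iterates φᵏ_n and φ⁰_n from the same initial point x₀ as φᵏ_n(t) = x₀ + ∫₀ᵗ X_k(φᵏ_{n-1}(s)) ds and φ⁰_n(t) = x₀ + ∫₀ᵗ X(φ⁰_{n-1}(s)) ds (iterates assumed to remain in Ω for t ∈ [0,T]). Then |φᵏ_n(t) - φ⁰_n(t)| ≤ M_k t + C^{n-1}(k,t), where C⁰(k,t) = 0 and C^{m}(k,t) = t·C(M_k t + C^{m-1}(k,t)). In particular, for fixed n, φᵏ_n → φ⁰_n uniformly on [0,T] as M_k → 0. -/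
open Set Filter intervalIntegral

/-- comparison of Picard iterates for a continuous vector field X
(with modulus of continuity C) and uniform approximations X_k with
sup_Ω|X_k - X| ≤ M_k: one has |φᵏ_n(t) - φ⁰_n(t)| ≤ M_k t + C^{n-1}(k,t) where
C⁰(k,t) = 0 and C^{m+1}(k,t) = t·C(M_k t + C^m(k,t)); in particular for fixed
n, φᵏ_n → φ⁰_n uniformly on [0,T] as M_k → 0. -/
theorem stmt19 (n : ℕ) (Ω : Set (EuclideanSpace ℝ (Fin n))) (hΩ : IsCompact Ω)
    (X : EuclideanSpace ℝ (Fin n) → EuclideanSpace ℝ (Fin n))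
    (hX : ContinuousOn X Ω)
    (C : ℝ → ℝ) (hCmono : Monotone C) (hCcont : Continuous C) (hC0 : C 0 = 0)
    (hmod : ∀ x ∈ Ω, ∀ y ∈ Ω, ‖X x - X y‖ ≤ C ‖x - y‖)
    (Xk : ℕ → EuclideanSpace ℝ (Fin n) → EuclideanSpace ℝ (Fin n))
    (hXkc : ∀ k, ContinuousOn (Xk k) Ω)
    (Mk : ℕ → ℝ) (hMk : ∀ k, ∀ z ∈ Ω, ‖Xk k z - X z‖ ≤ Mk k)
    (hMk0 : Tendsto Mk atTop (nhds 0))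
    (x₀ : EuclideanSpace ℝ (Fin n)) (hx₀ : x₀ ∈ Ω)
    (T : ℝ) (hT : 0 < T)
    (φ0 : ℕ → ℝ → EuclideanSpace ℝ (Fin n))
    (φk : ℕ → ℕ → ℝ → EuclideanSpace ℝ (Fin n))
    (hφ00 : ∀ t, φ0 0 t = x₀) (hφk0 : ∀ k t, φk k 0 t = x₀)
    (hφ0rec : ∀ m t, φ0 (m + 1) t = x₀ + ∫ s in (0 : ℝ)..t, X (φ0 m s))
    (hφkrec : ∀ k m t, φk k (m + 1) t = x₀ + ∫ s in (0 : ℝ)..t, Xk k (φk k m s))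
    (hφ0Ω : ∀ m, ∀ t ∈ Icc 0 T, φ0 m t ∈ Ω)
    (hφkΩ : ∀ k m, ∀ t ∈ Icc 0 T, φk k m t ∈ Ω)
    (D : ℕ → ℕ → ℝ → ℝ)
    (hD0 : ∀ k t, D k 0 t = 0)
    (hDrec : ∀ k m t, D k (m + 1) t = t * C (Mk k * t + D k m t)) :
    (∀ k m, ∀ t ∈ Icc 0 T,
      ‖φk k (m + 1) t - φ0 (m + 1) t‖ ≤ Mk k * t + D k m t) ∧
    (∀ m, TendstoUniformlyOn (fun k => φk k m) (φ0 m) atTop (Icc 0 T)) := by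
  -- basic positivity facts
  have hMknn : ∀ k, 0 ≤ Mk k := fun k =>
    le_trans (norm_nonneg _) (hMk k x₀ hx₀)
  have hCnn : ∀ a : ℝ, 0 ≤ a → 0 ≤ C a := fun a ha => hC0 ▸ hCmono ha
  have Dnn : ∀ k m, ∀ t : ℝ, 0 ≤ t → 0 ≤ D k m t := by
    intro k m
    induction m with
    | zero => intro t ht; rw [hD0]
    | succ m ih =>
      intro t ht
      rw [hDrec]
      exact mul_nonneg ht (hCnn _ (add_nonneg (mul_nonneg (hMknn k) ht) (ih t ht)))
  have Dmono : ∀ k m, ∀ s t : ℝ, 0 ≤ s → s ≤ t → D k m s ≤ D k m t := by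
    intro k m
    induction m with
    | zero => intro s t hs hst; rw [hD0, hD0]
    | succ m ih =>
      intro s t hs hst
      have ht : 0 ≤ t := hs.trans hst
      rw [hDrec, hDrec]
      have h1 : Mk k * s + D k m s ≤ Mk k * t + D k m t :=
        add_le_add (mul_le_mul_of_nonneg_left hst (hMknn k)) (ih s t hs hst)
      exact mul_le_mul hst (hCmono h1)
        (hCnn _ (add_nonneg (mul_nonneg (hMknn k) hs) (Dnn k m s hs))) ht
  have huIcc : uIcc (0:ℝ) T = Icc 0 T := uIcc_of_le hT.le
  -- continuity of the iterates
  have cont0 : ∀ m, ContinuousOn (φ0 m) (Icc 0 T) := by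
    intro m
    induction m with
    | zero => exact continuousOn_const.congr fun t _ => hφ00 t
    | succ m ih =>
      have hXc : ContinuousOn (fun s => X (φ0 m s)) (Icc 0 T) :=
        hX.comp ih fun s hs => hφ0Ω m s hs
      have hint : MeasureTheory.IntegrableOn (fun s => X (φ0 m s)) (uIcc 0 T) :=
        huIcc ▸ hXc.integrableOn_compact isCompact_Icc
      have hprim := intervalIntegral.continuousOn_primitive_interval hint
      rw [huIcc] at hprim
      exact (continuousOn_const.add hprim).congr fun t _ => hφ0rec m t
  have contk : ∀ k m, ContinuousOn (φk k m) (Icc 0 T) := by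
    intro k m
    induction m with
    | zero => exact continuousOn_const.congr fun t _ => hφk0 k t
    | succ m ih =>
      have hXc : ContinuousOn (fun s => Xk k (φk k m s)) (Icc 0 T) :=
        (hXkc k).comp ih fun s hs => hφkΩ k m s hs
      have hint : MeasureTheory.IntegrableOn (fun s => Xk k (φk k m s)) (uIcc 0 T) :=
        huIcc ▸ hXc.integrableOn_compact isCompact_Icc
      have hprim := intervalIntegral.continuousOn_primitive_interval hint
      rw [huIcc] at hprim
      exact (continuousOn_const.add hprim).congr fun t _ => hφkrec k m t
  -- integrability on subintervals
  have intk : ∀ k m, ∀ t ∈ Icc (0:ℝ) T,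
      IntervalIntegrable (fun s => Xk k (φk k m s)) MeasureTheory.volume 0 t := by
    intro k m t ht
    have hsub : uIcc (0:ℝ) t ⊆ Icc 0 T := by
      rw [uIcc_of_le ht.1]; exact Icc_subset_Icc le_rfl ht.2
    exact (((hXkc k).comp (contk k m) fun s hs => hφkΩ k m s hs).mono hsub).intervalIntegrable
  have int0 : ∀ m, ∀ t ∈ Icc (0:ℝ) T,
      IntervalIntegrable (fun s => X (φ0 m s)) MeasureTheory.volume 0 t := by
    intro m t ht
    have hsub : uIcc (0:ℝ) t ⊆ Icc 0 T := by
      rw [uIcc_of_le ht.1]; exact Icc_subset_Icc le_rfl ht.2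
    exact ((hX.comp (cont0 m) fun s hs => hφ0Ω m s hs).mono hsub).intervalIntegrable
  -- the key estimate
  have key : ∀ k m, ∀ t ∈ Icc (0:ℝ) T,
      ‖φk k (m + 1) t - φ0 (m + 1) t‖ ≤ Mk k * t + D k m t := by
    intro k m
    induction m with
    | zero =>
      intro t ht
      rw [hφkrec, hφ0rec, hD0, add_zero, add_sub_add_left_eq_sub,
        ← intervalIntegral.integral_sub (intk k 0 t ht) (int0 0 t ht)]
      have hb : ∀ s ∈ uIoc (0:ℝ) t, ‖Xk k (φk k 0 s) - X (φ0 0 s)‖ ≤ Mk k := by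
        intro s _
        rw [hφk0, hφ00]
        exact hMk k x₀ hx₀
      calc ‖∫ s in (0:ℝ)..t, (Xk k (φk k 0 s) - X (φ0 0 s))‖
          ≤ Mk k * |t - 0| := intervalIntegral.norm_integral_le_of_norm_le_const hb
        _ = Mk k * t := by rw [sub_zero, abs_of_nonneg ht.1]
    | succ m ih =>
      intro t ht
      have hIoc : uIoc (0:ℝ) t ⊆ Icc 0 T := by
        rw [uIoc_of_le ht.1]
        exact (Ioc_subset_Icc_self).trans (Icc_subset_Icc le_rfl ht.2)
      rw [hφkrec, hφ0rec, add_sub_add_left_eq_sub,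
        ← intervalIntegral.integral_sub (intk k (m+1) t ht) (int0 (m+1) t ht)]
      have hb : ∀ s ∈ uIoc (0:ℝ) t,
          ‖Xk k (φk k (m+1) s) - X (φ0 (m+1) s)‖ ≤ Mk k + C (Mk k * t + D k m t) := by
        intro s hs
        have hsIcc := hIoc hs
        have hk : φk k (m+1) s ∈ Ω := hφkΩ k (m+1) s hsIcc
        have h0 : φ0 (m+1) s ∈ Ω := hφ0Ω (m+1) s hsIcc
        have hst : s ≤ t := by
          rw [uIoc_of_le ht.1] at hs; exact hs.2
        have h1 : ‖Xk k (φk k (m+1) s) - X (φ0 (m+1) s)‖ ≤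
            ‖Xk k (φk k (m+1) s) - X (φk k (m+1) s)‖ + ‖X (φk k (m+1) s) - X (φ0 (m+1) s)‖ := by
          have := norm_sub_le_norm_sub_add_norm_sub (Xk k (φk k (m+1) s)) (X (φk k (m+1) s))
            (X (φ0 (m+1) s))
          exact this
        refine h1.trans (add_le_add (hMk k _ hk) ?_)
        refine (hmod _ hk _ h0).trans (hCmono ?_)
        refine (ih s hsIcc).trans ?_
        exact add_le_add (mul_le_mul_of_nonneg_left hst (hMknn k)) (Dmono k m s t hsIcc.1 hst)
      calc ‖∫ s in (0:ℝ)..t, (Xk k (φk k (m+1) s) - X (φ0 (m+1) s))‖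
          ≤ (Mk k + C (Mk k * t + D k m t)) * |t - 0| :=
            intervalIntegral.norm_integral_le_of_norm_le_const hb
        _ = Mk k * t + D k (m + 1) t := by
            rw [sub_zero, abs_of_nonneg ht.1, hDrec]; ring
  constructor
  · exact key
  · -- the bound tends to 0
    have DT0 : ∀ m, Tendsto (fun k => D k m T) atTop (nhds 0) := by
      intro m
      induction m with
      | zero => simpa [hD0] using tendsto_const_nhds
      | succ m ih =>
        have harg : Tendsto (fun k => Mk k * T + D k m T) atTop (nhds 0) := by
          have := (hMk0.mul_const T).add ih
          simpa using this
        have hC : Tendsto (fun k => C (Mk k * T + D k m T)) atTop (nhds (C 0)) :=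
          (hCcont.tendsto 0).comp harg
        rw [hC0] at hC
        have := hC.const_mul T
        simp only [mul_zero] at this
        refine Tendsto.congr (fun k => ?_) this
        rw [hDrec]
      -- done
    intro m
    cases m with
    | zero =>
      rw [Metric.tendstoUniformlyOn_iff]
      intro ε hε
      filter_upwards with k t ht
      rw [hφ00, hφk0]
      simpa using hε
    | succ m =>
      rw [Metric.tendstoUniformlyOn_iff]
      intro ε hε
      have hbound : Tendsto (fun k => Mk k * T + D k m T) atTop (nhds 0) := by
        have := (hMk0.mul_const T).add (DT0 m)
        simpa using this
      have hev : ∀ᶠ k in atTop, Mk k * T + D k m T < ε :=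
        (hbound.eventually (eventually_lt_nhds hε))
      filter_upwards [hev] with k hk t ht
      have h1 : dist (φ0 (m+1) t) (φk k (m+1) t) = ‖φk k (m+1) t - φ0 (m+1) t‖ := by
        rw [dist_comm, dist_eq_norm]
      rw [h1]
      refine lt_of_le_of_lt ((key k m t ht).trans ?_) hk
      exact add_le_add (mul_le_mul_of_nonneg_left ht.2 (hMknn k)) (Dmono k m t T ht.1 ht.2)
end
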